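/- Let N ≥ 3 be an integer and ρ ∈ (1/2, 1) satisfy ρ^(2N)·(2Nρ + 2N + 1) = 1. Then for every integer r with 1 ≤ r < N, A_{2r−2}(ρ)·A_{2r}(ρ) − A_{2r−1}(ρ)^2 > 0, where A_L(ρ) = Σ_{s=0}^{L} (−1)^s (L+1−s) ρ^s. -/
import Mathlib


/-- A_L(ρ) = Σ_{s=0}^{L} (−1)^s (L+1−s) ρ^s. -/
noncomputable def A (L : ℕ) (ρ : ℝ) : ℝ :=
  ∑ s ∈ Finset.range (L + 1), (-1 : ℝ) ^ s * ((L + 1 - s : ℕ) : ℝ) * ρ ^ s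

lemma A_succ (L : ℕ) (ρ : ℝ) :
    A (L + 1) ρ = A L ρ + ∑ s ∈ Finset.range (L + 2), (-ρ) ^ s := by
  unfold A
  have h : ∀ s ∈ Finset.range (L + 2),
      (-1 : ℝ) ^ s * ((L + 1 + 1 - s : ℕ) : ℝ) * ρ ^ s
        = (-1 : ℝ) ^ s * ((L + 1 - s : ℕ) : ℝ) * ρ ^ s + (-ρ) ^ s := by
    intro s hs
    have hs' : s ≤ L + 1 := by
      simp only [Finset.mem_range] at hs; omega
    have h1 : (L + 1 + 1 - s : ℕ) = (L + 1 - s : ℕ) + 1 := by omega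
    rw [h1, neg_pow ρ s]
    push_cast
    ring
  rw [Finset.sum_congr rfl h, Finset.sum_add_distrib]
  congr 1
  rw [Finset.sum_range_succ]
  simp

lemma A_closed (ρ : ℝ) (L : ℕ) :
    (1 + ρ) ^ 2 * A L ρ = (L + 1 : ℝ) + (L + 2) * ρ + (-1) ^ L * ρ ^ (L + 2) := by
  induction L with
  | zero =>
    simp [A]
    ring
  | succ L ih =>
    rw [A_succ, mul_add, ih]
    have hg : (1 + ρ) * ∑ s ∈ Finset.range (L + 2), (-ρ) ^ s = 1 - (-ρ) ^ (L + 2) := by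
      have h := geom_sum_mul (-ρ) (L + 2)
      nlinarith [h]
    have h2 : (1 + ρ) ^ 2 * ∑ s ∈ Finset.range (L + 2), (-ρ) ^ s
        = (1 + ρ) * (1 - (-ρ) ^ (L + 2)) := by
      rw [← hg]; ring
    rw [h2]
    have h3 : (-ρ : ℝ) ^ (L + 2) = (-1) ^ L * ρ ^ (L + 2) := by
      rw [neg_pow]
      have : (-1 : ℝ) ^ (L + 2) = (-1) ^ L := by
        rw [pow_add]; norm_num
      rw [this]
    have h4 : (-1 : ℝ) ^ (L + 1) = -(-1 : ℝ) ^ L := by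
      rw [pow_succ]; ring
    rw [h3, h4]
    push_cast
    ring

/-- The key monotonicity/unimodality argument: g(r) > 1 for 1 ≤ r < N. -/
lemma g_gt_one (N : ℕ) (ρ : ℝ) (hρ1 : 1 / 2 < ρ) (hρ2 : ρ < 1)
    (hroot : ρ ^ (2 * N) * (2 * N * ρ + 2 * N + 1) = 1)
    (r : ℕ) (hr1 : 1 ≤ r) (hr2 : r < N) :
    1 < ρ ^ (2 * r) * (2 * r * ρ + 2 * r + 1) := by
  have hρ0 : 0 < ρ := by linarith
  set g : ℕ → ℝ := fun m => ρ ^ (2 * m) * (2 * m * ρ + 2 * m + 1) with hg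
  show 1 < g r
  have step : ∀ m : ℕ, g (m + 1) - g m
      = ρ ^ (2 * m) * (1 + ρ) * (2 * ρ ^ 2 - (1 - ρ) * (2 * m * ρ + 2 * m + 1)) := by
    intro m
    simp only [hg]
    push_cast
    ring
  by_cases hB : 0 ≤ 2 * ρ ^ 2 - (1 - ρ) * (2 * r * ρ + 2 * r + 1)
  · -- g is nondecreasing on [1, r]; g 1 > 1
    have mono : ∀ m : ℕ, m < r → g m ≤ g (m + 1) := by
      intro m hm
      have hcast : (m : ℝ) ≤ r := by exact_mod_cast hm.le
      have hBm : 0 ≤ 2 * ρ ^ 2 - (1 - ρ) * (2 * m * ρ + 2 * m + 1) := by nlinarith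
      have hs := step m
      have hprod : 0 ≤ ρ ^ (2 * m) * (1 + ρ) * (2 * ρ ^ 2 - (1 - ρ) * (2 * m * ρ + 2 * m + 1)) :=
        mul_nonneg (mul_nonneg (pow_pos hρ0 (2 * m)).le (by linarith)) hBm
      linarith
    have chain : ∀ n : ℕ, 1 + n ≤ r → g 1 ≤ g (1 + n) := by
      intro n
      induction n with
      | zero => intro _; exact le_rfl
      | succ k ih =>
        intro h
        have h2 : g (1 + k) ≤ g (1 + k + 1) := mono (1 + k) (by omega)
        have h3 := ih (by omega)
        have e : 1 + (k + 1) = (1 + k) + 1 := by omega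
        rw [e]
        linarith
    have h1r : g 1 ≤ g r := by
      have h := chain (r - 1) (by omega)
      have e : 1 + (r - 1) = r := by omega
      rwa [e] at h
    have hg1 : 1 < g 1 := by
      simp only [hg]
      push_cast
      nlinarith [mul_pos (show (0:ℝ) < 2 * ρ - 1 by linarith)
        (mul_pos (show (0:ℝ) < 1 + ρ by linarith) (show (0:ℝ) < 1 + ρ by linarith))]
    linarith
  · -- g is strictly decreasing on [r, N]; g N = 1
    push_neg at hB
    have anti : ∀ m : ℕ, r ≤ m → g (m + 1) < g m := by
      intro m hm
      have hcast : (r : ℝ) ≤ m := by exact_mod_cast hm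
      have hBm : 2 * ρ ^ 2 - (1 - ρ) * (2 * m * ρ + 2 * m + 1) < 0 := by nlinarith
      have hs := step m
      have hprod : ρ ^ (2 * m) * (1 + ρ) * (2 * ρ ^ 2 - (1 - ρ) * (2 * m * ρ + 2 * m + 1)) < 0 :=
        mul_neg_of_pos_of_neg (mul_pos (pow_pos hρ0 (2 * m)) (by linarith)) hBm
      linarith
    have chain : ∀ k : ℕ, g (r + k + 1) < g r := by
      intro k
      induction k with
      | zero => simpa using anti r le_rfl
      | succ n ih =>
        have := anti (r + n + 1) (by omega)
        have e : r + (n + 1) + 1 = (r + n + 1) + 1 := by omega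
        rw [e]
        linarith
    have hN : g N < g r := by
      have e : N = r + (N - r - 1) + 1 := by omega
      rw [e]
      exact chain (N - r - 1)
    have hgN : g N = 1 := hroot
    linarith

theorem stmt_5 (N : ℕ) (hN : 3 ≤ N) (ρ : ℝ) (hρ1 : 1 / 2 < ρ) (hρ2 : ρ < 1)
    (hroot : ρ ^ (2 * N) * (2 * N * ρ + 2 * N + 1) = 1)
    (r : ℕ) (hr1 : 1 ≤ r) (hr2 : r < N) :
    0 < A (2 * r - 2) ρ * A (2 * r) ρ - (A (2 * r - 1) ρ) ^ 2 := by
  obtain ⟨m, rfl⟩ : ∃ m, r = m + 1 := ⟨r - 1, by omega⟩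
  have e1 : 2 * (m + 1) - 2 = 2 * m := by omega
  have e2 : 2 * (m + 1) - 1 = 2 * m + 1 := by omega
  have e3 : 2 * (m + 1) = 2 * m + 2 := by omega
  rw [e1, e2, e3]
  have hρ0 : 0 < ρ := by linarith
  have key := g_gt_one N ρ hρ1 hρ2 hroot (m + 1) (by omega) hr2
  have hpow1 : ((-1 : ℝ)) ^ (2 * m) = 1 := by
    rw [pow_mul]; norm_num
  have hpow2 : ((-1 : ℝ)) ^ (2 * m + 1) = -1 := by
    rw [pow_succ, hpow1]; norm_num
  have hpow3 : ((-1 : ℝ)) ^ (2 * m + 2) = 1 := by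
    rw [pow_succ, hpow2]; norm_num
  have h1 := A_closed ρ (2 * m)
  have h2 := A_closed ρ (2 * m + 1)
  have h3 := A_closed ρ (2 * m + 2)
  rw [hpow1] at h1
  rw [hpow2] at h2
  rw [hpow3] at h3
  have e : (1 + ρ) ^ 4 * (A (2 * m) ρ * A (2 * m + 2) ρ - (A (2 * m + 1) ρ) ^ 2)
      = (1 + ρ) ^ 2 * (ρ ^ (2 * (m + 1)) * (2 * (m + 1 : ℕ) * ρ + 2 * (m + 1 : ℕ) + 1) - 1) := by
    calc (1 + ρ) ^ 4 * (A (2 * m) ρ * A (2 * m + 2) ρ - (A (2 * m + 1) ρ) ^ 2)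
        = ((1 + ρ) ^ 2 * A (2 * m) ρ) * ((1 + ρ) ^ 2 * A (2 * m + 2) ρ)
            - ((1 + ρ) ^ 2 * A (2 * m + 1) ρ) ^ 2 := by ring
      _ = (((2 * m : ℕ) + 1 : ℝ) + ((2 * m : ℕ) + 2) * ρ + 1 * ρ ^ (2 * m + 2))
            * (((2 * m + 2 : ℕ) + 1 : ℝ) + ((2 * m + 2 : ℕ) + 2) * ρ + 1 * ρ ^ (2 * m + 2 + 2))
            - (((2 * m + 1 : ℕ) + 1 : ℝ) + ((2 * m + 1 : ℕ) + 2) * ρ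
                + (-1) * ρ ^ (2 * m + 1 + 2)) ^ 2 := by rw [h1, h2, h3]
      _ = (1 + ρ) ^ 2 * (ρ ^ (2 * (m + 1)) * (2 * (m + 1 : ℕ) * ρ + 2 * (m + 1 : ℕ) + 1) - 1) := by
            push_cast; ring
  have h4 : (0 : ℝ) < (1 + ρ) ^ 4 := by positivity
  have h5 : (0 : ℝ) < (1 + ρ) ^ 2 * (ρ ^ (2 * (m + 1)) * (2 * (m + 1 : ℕ) * ρ + 2 * (m + 1 : ℕ) + 1) - 1) := by
    have : (0 : ℝ) < (1 + ρ) ^ 2 := by positivity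
    push_cast at key ⊢
    nlinarith
  nlinarith [e, h4, h5]
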